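/- arXiv:math/0502265 — 4 statements merged into one kernel-verified Lean document; each statement's English description precedes it below -/
import Mathlib

section
/- The relation <* on ordinals defined by γ <* δ iff (G₁(γ) = G₁(δ) and G₂(γ) < G₂(δ)) or (G₁(γ) < G₁(δ) and G₂(γ) < Gcl(G₂(δ))) is well-founded, where G₁, G₂ are the projections of the Gödel pairing function and Gcl(α) is the least G-closed ordinal ≥ α. -/
open Ordinal

/-- The canonical ordering `<*` on pairs of ordinals: first by maximum,
then by first coordinate, then by second coordinate. -/
def gLT (p q : Ordinal × Ordinal) : Prop :=
  max p.1 p.2 < max q.1 q.2 ∨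
    (max p.1 p.2 = max q.1 q.2 ∧ p.1 < q.1) ∨
    (max p.1 p.2 = max q.1 q.2 ∧ p.1 = q.1 ∧ p.2 < q.2)

/-- `η` is closed under the Gödel pairing function `G`. -/
def GClosed (G : gLT ≃r ((· < ·) : Ordinal → Ordinal → Prop)) (η : Ordinal) : Prop :=
  ∀ η₁ η₂, η₁ < η → η₂ < η → G (η₁, η₂) < η

/-- the relation `γ <* δ` iff
`(G₁(γ) = G₁(δ) ∧ G₂(γ) < G₂(δ)) ∨ (G₁(γ) < G₁(δ) ∧ G₂(γ) < Gcl(G₂(δ)))`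
is well-founded, where `G₁, G₂` are the projections of the Gödel pairing
function and `Gcl(α)` is the least `G`-closed ordinal `≥ α`. -/
theorem godel_star_wellFounded
    (G : gLT ≃r ((· < ·) : Ordinal → Ordinal → Prop))
    (G₁ G₂ : Ordinal → Ordinal)
    (hproj : ∀ β : Ordinal, G (G₁ β, G₂ β) = β)
    (Gcl : Ordinal → Ordinal)
    (hGcl : ∀ α : Ordinal, α ≤ Gcl α ∧ GClosed G (Gcl α) ∧
      ∀ η, α ≤ η → GClosed G η → Gcl α ≤ η) :
    WellFounded (fun γ δ : Ordinal =>
      (G₁ γ = G₁ δ ∧ G₂ γ < G₂ δ) ∨ (G₁ γ < G₁ δ ∧ G₂ γ < Gcl (G₂ δ))) := by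
  have hmono : ∀ x y : Ordinal, x < Gcl y → Gcl x ≤ Gcl y := fun x y h =>
    (hGcl x).2.2 _ h.le (hGcl y).2.1
  have hwf : WellFounded (Prod.Lex ((· < ·) : Ordinal → Ordinal → Prop)
      (Prod.Lex ((· < ·) : Ordinal → Ordinal → Prop) ((· < ·) : Ordinal → Ordinal → Prop))) :=
    (Ordinal.lt_wf).prod_lex ((Ordinal.lt_wf).prod_lex Ordinal.lt_wf)
  have := InvImage.wf (fun γ : Ordinal => (Gcl (G₂ γ), G₁ γ, G₂ γ)) hwf
  apply Subrelation.wf ?_ this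
  intro γ δ h
  rcases h with ⟨h1, h2⟩ | ⟨h1, h2⟩
  · rcases lt_or_eq_of_le (hmono (G₂ γ) (G₂ δ) (h2.trans_le (hGcl (G₂ δ)).1)) with hc | hc
    · exact Prod.Lex.left _ _ hc
    · unfold InvImage
      beta_reduce
      rw [hc]
      exact Prod.Lex.right _ (h1 ▸ Prod.Lex.right _ h2)
  · rcases lt_or_eq_of_le (hmono (G₂ γ) (G₂ δ) h2) with hc | hc
    · exact Prod.Lex.left _ _ hc
    · unfold InvImage
      beta_reduce
      rw [hc]
      exact Prod.Lex.right _ (Prod.Lex.left _ _ h1)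
end

section
/- If E is an extensional, well-founded relation on a set of ordinals with a unique top element τ (every element of the field is reachable from τ by a finite descending chain) and d is a nonempty subset of the field not containing the bottom element, then the relation E' formed by taking the union of all cuts of E at elements of d together with edges from each element of d to a new point α not in the field of E is again extensional, well-founded, and has unique top element α; moreover the collapse of E' is exactly the set of collapses of cut(E,δ) for δ ∈ d. -/
open Ordinal

/-- The field of a binary relation on ordinals (domain ∪ range),
where `r γ β` means `γ` is an `r`-predecessor of `β`. -/
def fld (r : Ordinal → Ordinal → Prop) : Set Ordinal :=
  {x | (∃ y, r x y) ∨ (∃ y, r y x)}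

/-- Well-foundedness in the sense of SO: every nonempty subset of the field
contains an element with no `r`-predecessor inside the subset. -/
def IsWFd (r : Ordinal → Ordinal → Prop) : Prop :=
  ∀ b : Set Ordinal, b ⊆ fld r → b.Nonempty → ∃ β ∈ b, ∀ α ∈ b, ¬ r α β

/-- Extensionality: elements of the field with equal sets of
`r`-predecessors are equal. -/
def IsExt (r : Ordinal → Ordinal → Prop) : Prop :=
  ∀ α ∈ fld r, ∀ β ∈ fld r, {γ | r γ α} = {γ | r γ β} → α = β

/-- `τ` is a top element of `r`: every element of the field is reachable
from `τ` by a finite descending `r`-chain. -/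
def CTop (r : Ordinal → Ordinal → Prop) (τ : Ordinal) : Prop :=
  τ ∈ fld r ∧ ∀ x ∈ fld r, Relation.ReflTransGen r x τ

/-- `β` is a bottom element of `r`: it lies in the field and has no
`r`-predecessors. -/
def IsBot' (r : Ordinal → Ordinal → Prop) (β : Ordinal) : Prop :=
  β ∈ fld r ∧ ∀ γ, ¬ r γ β

/-- A code: a nonempty, well-founded, extensional binary relation on
ordinals with a unique top element, whose bottom elements have a unique
successor. -/
def Code (r : Ordinal → Ordinal → Prop) : Prop :=
  (fld r).Nonempty ∧ IsWFd r ∧ IsExt r ∧ (∃! τ, CTop r τ) ∧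
    ∀ β, IsBot' r β → ∃! γ, r β γ

/-- `cut r β`: the restriction of `r` to elements reachable from `β`
by finite descending chains. -/
def cut (r : Ordinal → Ordinal → Prop) (β : Ordinal) :
    Ordinal → Ordinal → Prop :=
  fun x y => r x y ∧ Relation.ReflTransGen r x β ∧ Relation.ReflTransGen r y β

/-- `f` is a relation-preserving map (morphism) from `a` to `b`. -/
def Mor (f : Ordinal → Ordinal) (a b : Ordinal → Ordinal → Prop) : Prop :=
  (∀ x ∈ fld a, f x ∈ fld b) ∧ ∀ x y, a x y → b (f x) (f y)

/-- `(f, g)` is a pair of mutually inverse morphisms between `a` and `b`. -/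
def IsoPair (f g : Ordinal → Ordinal) (a b : Ordinal → Ordinal → Prop) : Prop :=
  Mor f a b ∧ Mor g b a ∧ (∀ x ∈ fld a, g (f x) = x) ∧ (∀ y ∈ fld b, f (g y) = y)

/-- `a ≈ b`: the codes `a` and `b` are isomorphic. -/
def CodeIso (a b : Ordinal → Ordinal → Prop) : Prop :=
  ∃ f g, IsoPair f g a b

/-- The coded membership relation: `a ∈̃ b`. -/
def CMem (a b : Ordinal → Ordinal → Prop) : Prop :=
  Code b ∧ ∃ τ β, CTop b τ ∧ b β τ ∧ CodeIso a (cut b β)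

/-- `π` is a Mostowski collapse of `r` (on its field):
`π β = {π γ : γ r β}` for every `β` in the field. -/
def IsCollapse (r : Ordinal → Ordinal → Prop) (π : Ordinal → ZFSet) : Prop :=
  ∀ β ∈ fld r, ∀ z : ZFSet, z ∈ π β ↔ ∃ γ, r γ β ∧ π γ = z

/-- Lemma 4: prescribing the elements of a coded set.
Given an extensional well-founded `r` with unique top `τ`, a nonempty
subset `d` of the field avoiding the bottom, and a new point `α` outside
the field, the relation
`E' = {(δ,α) : δ ∈ d} ∪ ⋃_{δ ∈ d} cut r δ`
is extensional, well-founded, has unique top `α`, and the collapse of `E'`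
at `α` is exactly the set of collapses of the cuts at elements of `d`. -/
theorem prescribe_elements (r : Ordinal → Ordinal → Prop)
    (hext : IsExt r) (hwf : IsWFd r) (τ : Ordinal) (htop : ∃! t, CTop r t)
    (hτ : CTop r τ)
    (d : Set Ordinal) (hd : d ⊆ fld r) (hdne : d.Nonempty)
    (hdbot : ∀ δ ∈ d, ∃ γ, r γ δ)
    (α : Ordinal) (hα : α ∉ fld r) :
    let E' : Ordinal → Ordinal → Prop :=
      fun x y => (x ∈ d ∧ y = α) ∨ ∃ δ ∈ d, cut r δ x y
    IsExt E' ∧ IsWFd E' ∧ CTop E' α ∧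
      (∀ τ', CTop E' τ' → τ' = α) ∧
      (∀ π : Ordinal → ZFSet, IsCollapse E' π → ∀ z : ZFSet,
        z ∈ π α ↔ ∃ δ ∈ d, ∃ π' : Ordinal → ZFSet,
          IsCollapse (cut r δ) π' ∧ π' δ = z) := by

  intro E'
  have hE' : ∀ x y, E' x y ↔ ((x ∈ d ∧ y = α) ∨ ∃ δ ∈ d, cut r δ x y) :=
    fun _ _ => Iff.rfl
  -- reachability stays within the field
  have hSfld : ∀ x δ, δ ∈ d → Relation.ReflTransGen r x δ → x ∈ fld r := by
    intro x δ hδ h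
    rcases h.cases_head with rfl | ⟨c, hc, -⟩
    · exact hd hδ
    · exact Or.inl ⟨c, hc⟩
  have hαne : ∀ x δ, δ ∈ d → Relation.ReflTransGen r x δ → x ≠ α := by
    intro x δ hδ h hxa
    exact hα (hxa ▸ hSfld x δ hδ h)
  -- acyclicity
  have hacyc : ∀ x, ¬ Relation.TransGen r x x := by
    intro x hx
    have hbsub : {z | Relation.TransGen r z x ∧ Relation.TransGen r x z} ⊆ fld r := by
      rintro z ⟨h1, h2⟩
      rcases Relation.TransGen.tail'_iff.mp h2 with ⟨w, -, hw⟩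
      exact Or.inr ⟨w, hw⟩
    obtain ⟨β, hβb, hβmin⟩ := hwf _ hbsub ⟨x, hx, hx⟩
    rcases Relation.TransGen.tail'_iff.mp hβb.2 with ⟨w, hxw, hwβ⟩
    refine hβmin w ⟨Relation.TransGen.head hwβ hβb.1, ?_⟩ hwβ
    rcases Relation.reflTransGen_iff_eq_or_transGen.mp hxw with rfl | h
    · exact hx
    · exact h
  -- predecessors in E' of points reachable from d
  have hpred : ∀ β δ, δ ∈ d → Relation.ReflTransGen r β δ → ∀ γ, (E' γ β ↔ r γ β) := by
    intro β δ hδ hβ γ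
    rw [hE']
    constructor
    · rintro (⟨-, rfl⟩ | ⟨δ', hδ', hc, -, -⟩)
      · exact absurd rfl (hαne β δ hδ hβ)
      · exact hc
    · intro h
      exact Or.inr ⟨δ, hδ, h, Relation.ReflTransGen.head h hβ, hβ⟩
  -- predecessors of α in E' are exactly d
  have hmemd : ∀ γ, E' γ α ↔ γ ∈ d := by
    intro γ
    rw [hE']
    constructor
    · rintro (⟨hγ, -⟩ | ⟨δ, hδ, hc, -, -⟩)
      · exact hγ
      · exact absurd (Or.inr ⟨γ, hc⟩) hα
    · intro hγ
      exact Or.inl ⟨hγ, rfl⟩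
  have hfldα : α ∈ fld E' := by
    obtain ⟨δ, hδ⟩ := hdne
    exact Or.inr ⟨δ, (hmemd δ).mpr hδ⟩
  have hfldsub : ∀ x, x ∈ fld E' → x = α ∨ ∃ δ ∈ d, Relation.ReflTransGen r x δ := by
    rintro x (⟨y, hxy⟩ | ⟨y, hyx⟩)
    · rcases (hE' x y).mp hxy with ⟨hx, -⟩ | ⟨δ, hδ, -, hx, -⟩
      · exact Or.inr ⟨x, hx, Relation.ReflTransGen.refl⟩
      · exact Or.inr ⟨δ, hδ, hx⟩
    · rcases (hE' y x).mp hyx with ⟨-, rfl⟩ | ⟨δ, hδ, -, -, hx⟩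
      · exact Or.inl rfl
      · exact Or.inr ⟨δ, hδ, hx⟩
  have hSfldE' : ∀ x δ, δ ∈ d → Relation.ReflTransGen r x δ → x ∈ fld E' := by
    intro x δ hδ h
    rcases h.cases_head with rfl | ⟨c, hc, hcδ⟩
    · exact Or.inl ⟨α, (hmemd x).mpr hδ⟩
    · exact Or.inl ⟨c, (hE' x c).mpr (Or.inr ⟨δ, hδ, hc, h, hcδ⟩)⟩
  -- lifting chains from r to E'
  have hlift : ∀ δ, δ ∈ d → ∀ x, Relation.ReflTransGen r x δ →
      Relation.ReflTransGen E' x δ := by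
    intro δ hδ x hx
    induction hx using Relation.ReflTransGen.head_induction_on with
    | refl => exact Relation.ReflTransGen.refl
    | head h' h ih =>
      exact Relation.ReflTransGen.head
        ((hE' _ _).mpr (Or.inr ⟨δ, hδ, h', Relation.ReflTransGen.head h' h, h⟩)) ih
  -- field of cuts
  have hfldcut : ∀ δ, δ ∈ d → ∀ x, x ∈ fld (cut r δ) ↔ Relation.ReflTransGen r x δ := by
    intro δ hδ x
    constructor
    · rintro (⟨y, -, h, -⟩ | ⟨y, -, -, h⟩) <;> exact h
    · intro h
      rcases h.cases_head with rfl | ⟨c, hc, hcδ⟩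
      · obtain ⟨γ, hγ⟩ := hdbot x hδ
        exact Or.inr ⟨γ, hγ, Relation.ReflTransGen.single hγ, Relation.ReflTransGen.refl⟩
      · exact Or.inl ⟨c, hc, h, hcδ⟩
  have hcutpred : ∀ δ β, Relation.ReflTransGen r β δ → ∀ γ, (cut r δ γ β ↔ r γ β) := by
    intro δ β hβ γ
    exact ⟨fun h => h.1, fun h => ⟨h, Relation.ReflTransGen.head h hβ, hβ⟩⟩
  -- well-founded induction on the cut
  have hind : ∀ δ, δ ∈ d → ∀ P : Ordinal → Prop,
      (∀ β, Relation.ReflTransGen r β δ →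
        (∀ γ, r γ β → Relation.ReflTransGen r γ δ → P γ) → P β) →
      ∀ β, Relation.ReflTransGen r β δ → P β := by
    intro δ hδ P hstep β hβ
    by_contra hP
    obtain ⟨β₀, ⟨hβ₀δ, hβ₀P⟩, hmin⟩ :=
      hwf {z | Relation.ReflTransGen r z δ ∧ ¬ P z}
        (fun z hz => hSfld z δ hδ hz.1) ⟨β, hβ, hP⟩
    exact hβ₀P (hstep β₀ hβ₀δ fun γ hγ hγδ => by_contra fun h => hmin γ ⟨hγδ, h⟩ hγ)
  refine ⟨?_, ?_, ?_, ?_, ?_⟩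
  -- extensionality
  · intro x hx y hy hpredeq
    rcases hfldsub x hx with rfl | ⟨δx, hδx, hxδ⟩
    · rcases hfldsub y hy with rfl | ⟨δy, hδy, hyδ⟩
      · rfl
      · exfalso
        have h1 : E' δy x := (hmemd δy).mpr hδy
        have h2 : E' δy y := by
          have := Set.ext_iff.mp hpredeq δy
          exact this.mp h1
        have h3 : r δy y := (hpred y δy hδy hyδ δy).mp h2
        exact hacyc δy (Relation.TransGen.head' h3 hyδ)
    · rcases hfldsub y hy with rfl | ⟨δy, hδy, hyδ⟩
      · exfalso
        have h1 : E' δx y := (hmemd δx).mpr hδx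
        have h2 : E' δx x := by
          have := Set.ext_iff.mp hpredeq δx
          exact this.mpr h1
        have h3 : r δx x := (hpred x δx hδx hxδ δx).mp h2
        exact hacyc δx (Relation.TransGen.head' h3 hxδ)
      · refine hext x (hSfld x δx hδx hxδ) y (hSfld y δy hδy hyδ) ?_
        ext γ
        rw [Set.mem_setOf_eq, Set.mem_setOf_eq, ← hpred x δx hδx hxδ γ,
          ← hpred y δy hδy hyδ γ]
        exact Set.ext_iff.mp hpredeq γ
  -- well-foundedness
  · intro b hb hbne
    by_cases hc : {x | x ∈ b ∧ ∃ δ ∈ d, Relation.ReflTransGen r x δ}.Nonempty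
    · obtain ⟨β, ⟨hβb, δ, hδ, hβδ⟩, hβmin⟩ :=
        hwf _ (fun z hz => by obtain ⟨-, δ', hδ', h⟩ := hz; exact hSfld z δ' hδ' h) hc
      refine ⟨β, hβb, fun γ hγ hEγβ => ?_⟩
      have hr : r γ β := (hpred β δ hδ hβδ γ).mp hEγβ
      exact hβmin γ ⟨hγ, δ, hδ, Relation.ReflTransGen.head hr hβδ⟩ hr
    · obtain ⟨x, hx⟩ := hbne
      have hxα : x = α := by
        rcases hfldsub x (hb hx) with rfl | ⟨δ, hδ, h⟩
        · rfl
        · exact absurd ⟨x, hx, δ, hδ, h⟩ hc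
      subst hxα
      refine ⟨x, hx, fun γ hγ hγα => ?_⟩
      exact hc ⟨γ, hγ, γ, (hmemd γ).mp hγα, Relation.ReflTransGen.refl⟩
  -- α is a top
  · refine ⟨hfldα, fun x hx => ?_⟩
    rcases hfldsub x hx with rfl | ⟨δ, hδ, h⟩
    · exact Relation.ReflTransGen.refl
    · exact Relation.ReflTransGen.tail (hlift δ hδ x h) ((hmemd δ).mpr hδ)
  -- uniqueness of the top
  · rintro τ' ⟨hτ'fld, hτ'top⟩
    rcases (hτ'top α hfldα).cases_head with h | ⟨c, hac, -⟩
    · exact h.symm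
    · rcases (hE' α c).mp hac with ⟨hαd, -⟩ | ⟨δ, hδ, hrc, -, -⟩
      · exact absurd (hd hαd) hα
      · exact absurd (Or.inl ⟨c, hrc⟩) hα
  -- the collapse
  · intro π hcol z
    have hrestr : ∀ δ, δ ∈ d → IsCollapse (cut r δ) π := by
      intro δ hδ β hβfld w
      have hβ : Relation.ReflTransGen r β δ := (hfldcut δ hδ β).mp hβfld
      rw [hcol β (hSfldE' β δ hδ hβ) w]
      exact exists_congr fun γ =>
        and_congr_left' ((hpred β δ hδ hβ γ).trans (hcutpred δ β hβ γ).symm)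
    have hagree : ∀ δ, δ ∈ d → ∀ π' : Ordinal → ZFSet, IsCollapse (cut r δ) π' →
        ∀ β, Relation.ReflTransGen r β δ → π β = π' β := by
      intro δ hδ π' hcol'
      refine hind δ hδ _ ?_
      intro β hβ ih
      apply ZFSet.ext
      intro w
      rw [hrestr δ hδ β ((hfldcut δ hδ β).mpr hβ) w,
        hcol' β ((hfldcut δ hδ β).mpr hβ) w]
      constructor
      · rintro ⟨γ, hγ, rfl⟩
        exact ⟨γ, hγ, (ih γ hγ.1 hγ.2.1).symm⟩
      · rintro ⟨γ, hγ, rfl⟩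
        exact ⟨γ, hγ, ih γ hγ.1 hγ.2.1⟩
    rw [hcol α hfldα z]
    constructor
    · rintro ⟨γ, hγ, hz⟩
      have hγd : γ ∈ d := (hmemd γ).mp hγ
      exact ⟨γ, hγd, π, hrestr γ hγd, hz⟩
    · rintro ⟨δ, hδ, π', hπ', hz⟩
      refine ⟨δ, (hmemd δ).mpr hδ, ?_⟩
      rw [hagree δ hδ π' hπ' δ Relation.ReflTransGen.refl]
      exact hz
end

section
/- There is no infinite descending chain under the coded membership relation ∈̃: if (aₙ) is a sequence of codes with aₙ₊₁ ∈̃ aₙ for all n, a contradiction follows. Equivalently, the relation ∈̃ on codes is well-founded modulo the congruence ≈. -/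
open Ordinal

/-!
If `b ∈̃ a` and `a ≈ cut c x`, the isomorphism carries the witnessing cut `cut a γ` (with `γ`
below the top `τ` of `a`) onto `cut c (f γ)`, and `f γ` lies strictly below `x` in `c` because
`c (f γ) (f τ)` and `f τ` reaches `x`. So every `a (n + 1)` is isomorphic to a cut `cut (a 0) x`,
and a point `x` of `a 0` that is minimal for the transitive closure among all these cut points
yields, one step further down the chain, a strictly smaller one.
-/

theorem IsWFd.wellFounded {r : Ordinal → Ordinal → Prop} (h : IsWFd r) : WellFounded r := by
  rw [WellFounded.wellFounded_iff_has_min]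
  intro s hs
  by_cases hsub : s ⊆ fld r
  · exact h s hsub hs
  · -- a point outside the field has no predecessors at all
    obtain ⟨m, hm, hmf⟩ := Set.not_subset.mp hsub
    exact ⟨m, hm, fun x _ hxm => hmf (Or.inr ⟨x, hxm⟩)⟩

section Cut

variable {r : Ordinal → Ordinal → Prop}

theorem fld_cut_subset (β : Ordinal) : fld (cut r β) ⊆ fld r := by
  rintro x (⟨y, hxy⟩ | ⟨y, hyx⟩)
  exacts [Or.inl ⟨y, hxy.1⟩, Or.inr ⟨y, hyx.1⟩]

theorem reflTransGen_cut {β γ x : Ordinal} (hγβ : Relation.ReflTransGen r γ β)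
    (hx : Relation.ReflTransGen r x γ) : Relation.ReflTransGen (cut r β) x γ := by
  induction hx using Relation.ReflTransGen.head_induction_on with
  | refl => exact .refl
  | head hxy hyγ ih => exact .head ⟨hxy, (hyγ.head hxy).trans hγβ, hyγ.trans hγβ⟩ ih

theorem cut_cut {β γ : Ordinal} (hγβ : Relation.ReflTransGen r γ β) :
    cut (cut r β) γ = cut r γ := by
  funext x y
  apply propext
  constructor
  · rintro ⟨⟨hxy, -, -⟩, hx, hy⟩
    exact ⟨hxy, Relation.ReflTransGen.mono (fun _ _ h => h.1) _ _ hx,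
      Relation.ReflTransGen.mono (fun _ _ h => h.1) _ _ hy⟩
  · rintro ⟨hxy, hx, hy⟩
    exact ⟨⟨hxy, hx.trans hγβ, hy.trans hγβ⟩, reflTransGen_cut hγβ hx, reflTransGen_cut hγβ hy⟩

end Cut

section Iso

variable {a b c : Ordinal → Ordinal → Prop}

theorem mor_of_map {f : Ordinal → Ordinal} (h : ∀ x y, a x y → b (f x) (f y)) : Mor f a b := by
  refine ⟨?_, h⟩
  rintro x (⟨y, hxy⟩ | ⟨y, hyx⟩)
  exacts [Or.inl ⟨f y, h _ _ hxy⟩, Or.inr ⟨f y, h _ _ hyx⟩]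

theorem Mor.cut {f : Ordinal → Ordinal} (hf : Mor f a b) (γ : Ordinal) :
    Mor f (cut a γ) (cut b (f γ)) :=
  mor_of_map fun _ _ ⟨hxy, hx, hy⟩ =>
    ⟨hf.2 _ _ hxy, Relation.ReflTransGen.lift f hf.2 _ _ hx,
      Relation.ReflTransGen.lift f hf.2 _ _ hy⟩

theorem IsoPair.cut {f g : Ordinal → Ordinal} (h : IsoPair f g a b) {γ : Ordinal}
    (hγ : γ ∈ fld a) : IsoPair f g (cut a γ) (cut b (f γ)) := by
  obtain ⟨hf, hg, hgf, hfg⟩ := h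
  have hg_cut : Mor g (_root_.cut b (f γ)) (_root_.cut a γ) := by
    simpa only [hgf γ hγ] using hg.cut (f γ)
  exact ⟨hf.cut γ, hg_cut, fun x hx => hgf x (fld_cut_subset γ hx),
    fun y hy => hfg y (fld_cut_subset (f γ) hy)⟩

theorem CodeIso.trans (hab : CodeIso a b) (hbc : CodeIso b c) : CodeIso a c := by
  obtain ⟨f, g, hf, hg, hgf, hfg⟩ := hab
  obtain ⟨f', g', hf', hg', hgf', hfg'⟩ := hbc
  refine ⟨f' ∘ f, g ∘ g',
    ⟨fun x hx => hf'.1 _ (hf.1 _ hx), fun x y h => hf'.2 _ _ (hf.2 _ _ h)⟩,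
    ⟨fun x hx => hg.1 _ (hg'.1 _ hx), fun x y h => hg.2 _ _ (hg'.2 _ _ h)⟩,
    fun x hx => ?_, fun y hy => ?_⟩
  · simp only [Function.comp_apply, hgf' _ (hf.1 _ hx), hgf _ hx]
  · simp only [Function.comp_apply, hfg _ (hg'.1 _ hy), hfg' _ hy]

theorem CMem.exists_transGen_codeIso_cut {x : Ordinal} (hba : CMem b a)
    (hac : CodeIso a (cut c x)) :
    ∃ y, Relation.TransGen c y x ∧ CodeIso b (cut c y) := by
  obtain ⟨-, τ, γ, -, hγτ, hb⟩ := hba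
  obtain ⟨f, g, hfg⟩ := hac
  obtain ⟨hfγτ, hfγx, hfτx⟩ := hfg.1.2 γ τ hγτ
  have hcut : CodeIso (cut a γ) (cut (cut c x) (f γ)) := ⟨f, g, hfg.cut (Or.inl ⟨τ, hγτ⟩)⟩
  rw [cut_cut hfγx] at hcut
  exact ⟨f γ, .head' hfγτ hfτx, hb.trans hcut⟩

end Iso

theorem cmem_no_infinite_descending_chain_general
    (a : ℕ → Ordinal → Ordinal → Prop)
    (hdesc : ∀ n, CMem (a (n + 1)) (a n)) : False := by
  have hwf : WellFounded (Relation.TransGen (a 0)) := (hdesc 0).1.2.1.wellFounded.transGen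
  set S : Set Ordinal := {x | ∃ n, CodeIso (a (n + 1)) (cut (a 0) x)}
  have hS : S.Nonempty := by
    obtain ⟨-, -, β, -, -, hβ⟩ := hdesc 0
    exact ⟨β, 0, hβ⟩
  obtain ⟨x, ⟨n, hx⟩, hmin⟩ := hwf.has_min S hS
  obtain ⟨y, hyx, hy⟩ := (hdesc (n + 1)).exists_transGen_codeIso_cut hx
  exact hmin y ⟨n + 1, hy⟩ hyx

/-- there is no infinite descending chain under the coded
membership relation `∈̃`. -/
theorem cmem_no_infinite_descending_chain
    (a : ℕ → Ordinal → Ordinal → Prop)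
    (hcode : ∀ n, Code (a n))
    (hdesc : ∀ n, CMem (a (n + 1)) (a n)) : False :=
  cmem_no_infinite_descending_chain_general a hdesc
end

section
/- Transfinite induction along set-like well-founded class relations: if R is a well-founded, set-like binary class relation on ordinals and φ is a property of ordinals such that for every α, (∀β R α, φ(β)) implies φ(α), then φ holds of all ordinals. -/
open Ordinal

/-- transfinite induction along set-like well-founded class
relations on the ordinals.  Set-like: each class of `R`-predecessors is a
set (small); well-founded: every nonempty set of ordinals has an
`R`-minimal element. -/
theorem transfinite_induction_setlike (R : Ordinal → Ordinal → Prop)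
    (hsetlike : ∀ α : Ordinal, Small.{0} {β : Ordinal | R β α})
    (hwf : ∀ s : Set Ordinal, Small.{0} s → s.Nonempty →
      ∃ β ∈ s, ∀ γ ∈ s, ¬ R γ β)
    (φ : Ordinal → Prop)
    (ih : ∀ α : Ordinal, (∀ β : Ordinal, R β α → φ β) → φ α) :
    ∀ α : Ordinal, φ α := by
  intro α
  by_contra hα
  -- closure under R-predecessors
  let C : ℕ → Set Ordinal := fun n => Nat.rec {α}
    (fun _ s => ⋃ β ∈ s, {γ | R γ β}) n
  have hCsmall : ∀ n, Small.{0} (Set.Elem (C n)) := by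
    intro n
    induction n with
    | zero => exact small_single α
    | succ n ihn =>
      exact @small_biUnion _ _ (C n) ihn (fun β _ => {γ | R γ β})
        (fun β _ => hsetlike β)
  set D : Set Ordinal := ⋃ n, C n with hD
  have hDsmall : Small.{0} D := @small_iUnion _ _ inferInstance C hCsmall
  have hclosed : ∀ β ∈ D, ∀ γ, R γ β → γ ∈ D := by
    intro β hβ γ hγ
    obtain ⟨n, hn⟩ := Set.mem_iUnion.1 hβ
    exact Set.mem_iUnion.2 ⟨n + 1, Set.mem_biUnion hn hγ⟩
  set T : Set Ordinal := {x ∈ D | ¬ φ x} with hT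
  have hTsmall : Small.{0} T := small_subset (fun x hx => hx.1)
  have hTne : T.Nonempty := ⟨α, Set.mem_iUnion.2 ⟨0, rfl⟩, hα⟩
  obtain ⟨β, hβT, hβmin⟩ := hwf T hTsmall hTne
  apply hβT.2
  apply ih
  intro γ hγ
  by_contra hγφ
  exact hβmin γ ⟨hclosed β hβT.1 γ hγ, hγφ⟩ hγ
end
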